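/- arXiv:1604.08543 — 6 statements merged into one kernel-verified Lean document; each statement's English description precedes it below -/
import Mathlib

section
/- For every integer n ≥ 1, there exist x, y in Z/nZ such that x^2 - 25*y^2 = -1 in Z/nZ. -/
lemma sqrt_neg_one_mod_5pow (k : ℕ) : ∃ a : ℤ, (5:ℤ)^k ∣ a^2 + 1 := by
  induction k with
  | zero => exact ⟨0, by norm_num⟩
  | succ k ih =>
    rcases Nat.eq_zero_or_pos k with rfl | hk
    · exact ⟨2, by norm_num⟩
    · obtain ⟨a, c, hc⟩ := ih
      obtain ⟨m, rfl⟩ : ∃ m, k = m + 1 := ⟨k - 1, by omega⟩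
      have h5a : ¬ (5:ℤ) ∣ a := by
        intro h
        have h1 : (5:ℤ) ∣ a^2 + 1 := by
          refine dvd_trans ?_ ⟨c, hc⟩
          exact dvd_pow_self 5 (by omega)
        have h2 : (5:ℤ) ∣ a^2 := dvd_pow h (by norm_num)
        have h3 : (5:ℤ) ∣ 1 := by
          have := dvd_sub h1 h2
          simpa using this
        norm_num at h3
      have hfermat : ∀ u : ZMod 5, u ≠ 0 → (2*u)^4 - 1 = 0 := by decide
      have hane : ((a : ZMod 5)) ≠ 0 := by
        rw [Ne, ZMod.intCast_zmod_eq_zero_iff_dvd]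
        exact_mod_cast h5a
      have key : (5:ℤ) ∣ (2*a)^4 - 1 := by
        have h0 : (((2*a)^4 - 1 : ℤ) : ZMod 5) = 0 := by
          push_cast
          exact hfermat _ hane
        have := (ZMod.intCast_zmod_eq_zero_iff_dvd ((2*a)^4 - 1) 5).mp h0
        exact_mod_cast this
      obtain ⟨d, hd⟩ := key
      set t : ℤ := -c*(2*a)^3 with ht
      exact ⟨a + t*5^(m+1), ⟨-c*d + t^2*5^m, by linear_combination hc - c * 5^(m+1) * hd⟩⟩

theorem x2_minus_25y2_eq_neg_one_solvable_mod_n (n : ℕ) (hn : 1 ≤ n) :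
    ∃ x y : ZMod n, x ^ 2 - 25 * y ^ 2 = -1 := by
  have h5 : Nat.Prime 5 := by norm_num
  have hn0 : n ≠ 0 := by omega
  set k := n.factorization 5 with hk
  set m := n / 5^k with hmdef
  have hsplit : 5^k * m = n := Nat.ordProj_mul_ordCompl_eq_self n 5
  have hm5 : ¬ (5 ∣ m) := Nat.not_dvd_ordCompl h5 hn0
  have hcop : Nat.Coprime 5 m := (Nat.Prime.coprime_iff_not_dvd h5).mpr hm5
  have hco5 : IsCoprime (5:ℤ) (m:ℤ) := by exact_mod_cast Nat.isCoprime_iff_coprime.mpr hcop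
  have hco : IsCoprime ((5:ℤ)^k) (m:ℤ) := hco5.pow_left
  obtain ⟨u, v, huv⟩ := id hco
  obtain ⟨p, q, hpq⟩ := id hco5
  obtain ⟨a, c, hc⟩ := sqrt_neg_one_mod_5pow k
  set X : ℤ := a*(1 - u*(5:ℤ)^k) with hXdef
  set Y : ℤ := p*(1 - v*(m:ℤ)) with hYdef
  have hX : X = a*v*(m:ℤ) := by rw [hXdef]; linear_combination (-a)*huv
  have hY : Y = p*u*(5:ℤ)^k := by rw [hYdef]; linear_combination (-p)*huv
  have hE5 : (5:ℤ)^k ∣ X^2 - 25*Y^2 + 1 := by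
    rw [hY, hXdef]
    exact ⟨c - 2*a^2*u + a^2*u^2*5^k - 25*p^2*u^2*5^k, by linear_combination hc⟩
  have hEm : (m:ℤ) ∣ X^2 - 25*Y^2 + 1 := by
    rw [hX, hYdef]
    exact ⟨a^2*v^2*(m:ℤ) + 50*p^2*v - 25*p^2*v^2*(m:ℤ) + q*(1+5*p),
      by linear_combination (-(1+5*p))*hpq⟩
  have hEn : (n:ℤ) ∣ X^2 - 25*Y^2 + 1 := by
    have := hco.mul_dvd hE5 hEm
    have hcast : ((5:ℤ)^k * (m:ℤ)) = (n:ℤ) := by exact_mod_cast congrArg (Nat.cast (R := ℤ)) hsplit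
    rwa [hcast] at this
  refine ⟨(X : ZMod n), (Y : ZMod n), ?_⟩
  have h0 : ((X^2 - 25*Y^2 + 1 : ℤ) : ZMod n) = 0 :=
    (ZMod.intCast_zmod_eq_zero_iff_dvd _ n).mpr hEn
  push_cast at h0
  linear_combination h0
end

section
/- There exist 2-adic integers x, y, z in Z_2 such that x^3 + y^3 + 2*z^3 = 2, x + y ≡ 2 (mod 8), and z ≡ 2 (mod 4). -/
open Polynomial

theorem exists_padic_points_cubic_with_congruences :
    ∃ x y z : ℤ_[2], x ^ 3 + y ^ 3 + 2 * z ^ 3 = 2 ∧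
      (8 : ℤ_[2]) ∣ (x + y - 2) ∧ (4 : ℤ_[2]) ∣ (z - 2) := by
  set F : Polynomial ℤ_[2] := C 64 * X ^ 3 + C 24 * X ^ 2 + C 3 * X + C 2 with hF
  have heval : F.eval 0 = 2 := by simp [hF]
  have hderiv : F.derivative.eval 0 = 3 := by simp [hF]
  have h3 : ‖(3 : ℤ_[2])‖ = 1 := by
    refine le_antisymm (PadicInt.norm_le_one _) (not_lt.1 fun h => ?_)
    have := (PadicInt.norm_int_lt_one_iff_dvd (p := 2) 3).1 (by push_cast; exact h)
    omega
  have h2 : ‖(2 : ℤ_[2])‖ < 1 := by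
    have := (PadicInt.norm_int_lt_one_iff_dvd (p := 2) 2).2 ⟨1, by ring⟩
    push_cast at this; exact this
  have hnorm : ‖F.eval 0‖ < ‖F.derivative.eval 0‖ ^ 2 := by
    rw [heval, hderiv, h3]; simpa using h2
  obtain ⟨t, ht, -⟩ := hensels_lemma hnorm
  have ht' : 64 * t ^ 3 + 24 * t ^ 2 + 3 * t + 2 = 0 := by
    simpa [hF] using ht
  refine ⟨1 + 8 * t, 1, 2, by linear_combination 8 * ht', ⟨t, by ring⟩, ⟨0, by ring⟩⟩
end

section
/- There do not exist rational numbers x, y, t such that x^2 + y^2 = (3 - t^2)*(t^2 - 2), although there do exist real numbers x, y, t satisfying this equation. -/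
/-!
Write `t = p / q` in lowest terms. Clearing denominators, `m * n` with `m = 3 q² - p²` and
`n = p² - 2 q²` is a sum of two rational squares. Since `m + n = q²` and `2 m + 3 n = p²`, the
factors are coprime; they are positive, and as `p, q` are not both even, one of them is `3` mod `4`.
By the two-squares theorem (primes `≡ 3 mod 4` divide a sum of two squares to even powers) and
coprimality, that factor is itself a sum of two squares, which is impossible mod `4`.
Over `ℝ`, the fibre `t² = 5 / 2` contains the point `(1 / 2, 0)`.
-/

theorem Nat.even_padicValNat_of_eq_sq_add_sq {n q : ℕ} (h : ∃ x y, n = x ^ 2 + y ^ 2)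
    (hq : q.Prime) (hq4 : q % 4 = 3) : Even (padicValNat q n) := by
  by_cases hqn : q ∈ n.primeFactors
  · exact Nat.eq_sq_add_sq_iff.mp h q hqn hq4
  · have : Fact q.Prime := ⟨hq⟩
    rcases eq_or_ne n 0 with rfl | hn
    · simp
    · rw [padicValNat.eq_zero_of_not_dvd fun hd => hqn (Nat.mem_primeFactors.mpr ⟨hq, hd, hn⟩)]
      exact Even.zero

theorem Nat.exists_sq_add_sq_of_sq_mul {c n : ℕ} (hc : c ≠ 0)
    (h : ∃ x y, c ^ 2 * n = x ^ 2 + y ^ 2) : ∃ x y, n = x ^ 2 + y ^ 2 := by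
  rcases eq_or_ne n 0 with rfl | hn
  · exact ⟨0, 0, rfl⟩
  refine Nat.eq_sq_add_sq_iff.mpr fun q hqn hq4 => ?_
  have hq := Nat.prime_of_mem_primeFactors hqn
  have : Fact q.Prime := ⟨hq⟩
  have := Nat.even_padicValNat_of_eq_sq_add_sq h hq hq4
  rw [padicValNat.mul (pow_ne_zero 2 hc) hn, padicValNat.pow] at this
  simpa [parity_simps] using this

theorem Nat.exists_sq_add_sq_of_coprime_mul {m n : ℕ} (hmn : m.Coprime n)
    (h : ∃ x y, m * n = x ^ 2 + y ^ 2) : ∃ x y, m = x ^ 2 + y ^ 2 := by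
  rcases eq_or_ne n 0 with rfl | hn
  · exact ⟨1, 0, by simpa using hmn⟩
  refine Nat.eq_sq_add_sq_iff.mpr fun q hqm hq4 => ?_
  have hq := Nat.prime_of_mem_primeFactors hqm
  have : Fact q.Prime := ⟨hq⟩
  have hqn : ¬ q ∣ n := fun hqn =>
    hq.one_lt.ne' (Nat.eq_one_of_dvd_coprimes hmn (Nat.dvd_of_mem_primeFactors hqm) hqn)
  have := Nat.even_padicValNat_of_eq_sq_add_sq h hq hq4
  rwa [padicValNat.mul (Nat.mem_primeFactors.mp hqm).2.2 hn,
    padicValNat.eq_zero_of_not_dvd hqn, add_zero] at this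

theorem Nat.exists_sq_add_sq_of_eq_ratCast_sq_add_sq {n : ℕ} {x y : ℚ}
    (h : x ^ 2 + y ^ 2 = n) : ∃ a b, n = a ^ 2 + b ^ 2 := by
  refine Nat.exists_sq_add_sq_of_sq_mul (c := x.den * y.den) (by positivity)
    ⟨(x.num * y.den).natAbs, (y.num * x.den).natAbs, ?_⟩
  have hx : (x.num : ℚ) = x * x.den := (Rat.mul_den_eq_num x).symm
  have hy : (y.num : ℚ) = y * y.den := (Rat.mul_den_eq_num y).symm
  have : (((x.den * y.den) ^ 2 * n : ℕ) : ℚ)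
      = (((x.num * y.den).natAbs ^ 2 + (y.num * x.den).natAbs ^ 2 : ℕ) : ℚ) := by
    push_cast [Nat.cast_natAbs, sq_abs, hx, hy, ← h]
    ring
  exact_mod_cast this

theorem ZMod.sq_add_sq_ne_three (a b : ZMod 4) : a ^ 2 + b ^ 2 ≠ 3 := by
  decide +revert

theorem ZMod.intCast_ne_three_of_isCoprime_mul_eq_sq_add_sq {M N : ℤ} (hM : 0 < M) (hN : 0 < N)
    (hMN : IsCoprime M N) {x y : ℚ} (h : x ^ 2 + y ^ 2 = M * N) : (M : ZMod 4) ≠ 3 := by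
  lift M to ℕ using hM.le
  lift N to ℕ using hN.le
  obtain ⟨a, b, hab⟩ := Nat.exists_sq_add_sq_of_coprime_mul (Nat.isCoprime_iff_coprime.mp hMN)
    (Nat.exists_sq_add_sq_of_eq_ratCast_sq_add_sq (n := M * N) (by exact_mod_cast h))
  rw [Int.cast_natCast, hab]
  push_cast
  exact ZMod.sq_add_sq_ne_three a b

section Chatelet

variable {p q : ℤ}

theorem pow_four_mul_chatelet_of_mul_eq {t : ℚ} (ht : t * q = p) :
    (q : ℚ) ^ 4 * ((3 - t ^ 2) * (t ^ 2 - 2))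
      = (3 * q ^ 2 - p ^ 2 : ℤ) * (p ^ 2 - 2 * q ^ 2 : ℤ) := by
  push_cast
  rw [← ht]
  ring

theorem Int.isCoprime_chatelet_factors (h : IsCoprime p q) :
    IsCoprime (3 * q ^ 2 - p ^ 2) (p ^ 2 - 2 * q ^ 2) := by
  obtain ⟨u, v, huv⟩ := h.pow (m := 2) (n := 2)
  exact ⟨2 * u + v, 3 * u + v, by linear_combination huv⟩

theorem Int.chatelet_factors_mod_four (h : IsCoprime p q) :
    (((3 * q ^ 2 - p ^ 2 : ℤ) : ZMod 4) = 3 ∨ ((p ^ 2 - 2 * q ^ 2 : ℤ) : ZMod 4) = 3) ∧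
      3 * q ^ 2 - p ^ 2 ≠ 0 ∧ p ^ 2 - 2 * q ^ 2 ≠ 0 := by
  obtain ⟨u, v, huv⟩ := h
  have key : ∀ p q u v : ZMod 4, u * p + v * q = 1 →
      (3 * q ^ 2 - p ^ 2 = 3 ∨ p ^ 2 - 2 * q ^ 2 = 3) ∧
        3 * q ^ 2 - p ^ 2 ≠ 0 ∧ p ^ 2 - 2 * q ^ 2 ≠ 0 := by
    decide
  obtain ⟨h3, hm, hn⟩ := key p q u v (by exact_mod_cast congrArg ((↑) : ℤ → ZMod 4) huv)
  exact ⟨by push_cast; exact h3, ne_of_apply_ne ((↑) : ℤ → ZMod 4) (by simpa using hm),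
    ne_of_apply_ne ((↑) : ℤ → ZMod 4) (by simpa using hn)⟩

theorem Int.chatelet_factors_pos (h : IsCoprime p q)
    (hmn : 0 ≤ (3 * q ^ 2 - p ^ 2) * (p ^ 2 - 2 * q ^ 2)) :
    0 < 3 * q ^ 2 - p ^ 2 ∧ 0 < p ^ 2 - 2 * q ^ 2 := by
  obtain ⟨-, hm0, hn0⟩ := Int.chatelet_factors_mod_four h
  rcases mul_pos_iff.mp (hmn.lt_of_ne (mul_ne_zero hm0 hn0).symm) with hpos | ⟨hm, hn⟩
  · exact hpos
  · nlinarith [sq_nonneg q]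

end Chatelet

theorem chatelet_surface_no_rational_points_but_real_points :
    (¬ ∃ x y t : ℚ, x ^ 2 + y ^ 2 = (3 - t ^ 2) * (t ^ 2 - 2)) ∧
    (∃ x y t : ℝ, x ^ 2 + y ^ 2 = (3 - t ^ 2) * (t ^ 2 - 2)) := by
  refine ⟨?_, 1 / 2, 0, √(5 / 2), by rw [Real.sq_sqrt (by norm_num)]; norm_num⟩
  rintro ⟨x, y, t, h⟩
  set p := t.num
  set q : ℤ := (t.den : ℤ)
  set m := 3 * q ^ 2 - p ^ 2
  set n := p ^ 2 - 2 * q ^ 2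
  have hpq : IsCoprime p q := Int.isCoprime_iff_gcd_eq_one.mpr t.reduced
  have hsq : (x * q ^ 2) ^ 2 + (y * q ^ 2) ^ 2 = m * n := by
    rw [← pow_four_mul_chatelet_of_mul_eq (by exact_mod_cast Rat.mul_den_eq_num t), ← h]
    ring
  have hmn : (0 : ℚ) ≤ m * n := hsq ▸ by positivity
  obtain ⟨hm, hn⟩ := Int.chatelet_factors_pos hpq (by exact_mod_cast hmn)
  have hcop := Int.isCoprime_chatelet_factors hpq
  rcases (Int.chatelet_factors_mod_four hpq).1 with h3 | h3
  · exact ZMod.intCast_ne_three_of_isCoprime_mul_eq_sq_add_sq hm hn hcop hsq h3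
  · exact ZMod.intCast_ne_three_of_isCoprime_mul_eq_sq_add_sq hn hm hcop.symm
      (by rw [hsq, mul_comm]) h3
end

section
/- If x, y, z are rational numbers with x^3 + y^3 + z^3 = 0, then x*y*z = 0. Consequently the plane cubic curve x^3 + y^3 + z^3 = 0 in P^2 over Q has exactly the three rational points [1 : -1 : 0], [1 : 0 : -1], [0 : 1 : -1]. -/
private lemma cube_inj : Function.Injective fun a : ℚ => a ^ 3 :=
  (Odd.strictMono_pow (by decide : Odd 3)).injective

private lemma neg_of_cubes {y z : ℚ} (h : y ^ 3 + z ^ 3 = 0) : y = -z := by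
  have : y ^ 3 = (-z) ^ 3 := by ring_nf; linarith
  exact cube_inj this

theorem fermat_cubic_rational_points :
    (∀ x y z : ℚ, x ^ 3 + y ^ 3 + z ^ 3 = 0 → x * y * z = 0) ∧
    (∀ x y z : ℚ, x ^ 3 + y ^ 3 + z ^ 3 = 0 → ¬ (x = 0 ∧ y = 0 ∧ z = 0) →
      ∃ q : ℚ, q ≠ 0 ∧
        ((x, y, z) = (q * 1, q * (-1), q * 0) ∨
         (x, y, z) = (q * 1, q * 0, q * (-1)) ∨
         (x, y, z) = (q * 0, q * 1, q * (-1)))) := by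
  have flt3 : FermatLastTheoremWith ℚ 3 :=
    fermatLastTheoremFor_iff_rat.mp fermatLastTheoremThree
  have key : ∀ x y z : ℚ, x ^ 3 + y ^ 3 + z ^ 3 = 0 → x * y * z = 0 := by
    intro x y z h
    by_contra hne
    have hx : x ≠ 0 := fun h0 => hne (by simp [h0])
    have hy : y ≠ 0 := fun h0 => hne (by simp [h0])
    have hz : z ≠ 0 := fun h0 => hne (by simp [h0])
    exact flt3 x y (-z) hx hy (neg_ne_zero.mpr hz) (by ring_nf; linarith)
  refine ⟨key, fun x y z h hne => ?_⟩
  have hxyz := key x y z h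
  rcases mul_eq_zero.mp hxyz with hxy | hz
  · rcases mul_eq_zero.mp hxy with hx | hy
    · -- x = 0, so y = -z
      subst hx
      have h' : y ^ 3 + z ^ 3 = 0 := by norm_num at h; linarith
      have hy : y = -z := neg_of_cubes h'
      subst hy
      refine ⟨-z, fun h0 => hne ⟨rfl, by simp [h0], by simpa using h0⟩, ?_⟩
      right; right; norm_num
    · -- y = 0, x = -z
      subst hy
      have h' : x ^ 3 + z ^ 3 = 0 := by norm_num at h; linarith
      have hx : x = -z := neg_of_cubes h'
      subst hx
      refine ⟨-z, fun h0 => hne ⟨by simp [h0], rfl, by simpa using h0⟩, ?_⟩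
      right; left; norm_num
  · -- z = 0, x = -y
    subst hz
    have h' : x ^ 3 + y ^ 3 = 0 := by norm_num at h; linarith
    have hx : x = -y := neg_of_cubes h'
    subst hx
    refine ⟨-y, fun h0 => hne ⟨by simp [h0], by simpa using h0, rfl⟩, ?_⟩
    left; norm_num
end

section
/- Let p_1, ..., p_n be distinct prime numbers. The diagonal embedding of Q into the product R × Q_{p_1} × ... × Q_{p_n} has dense image (where each Q_{p_i} carries the p_i-adic topology and the product carries the product topology). -/
/-!
The real and the `p`-adic absolute values on `ℚ` are nontrivial and pairwise inequivalent, so the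
abstract weak approximation theorem makes `ℚ` dense in the product of the copies of `ℚ` carrying
these absolute values. Each copy embeds isometrically with dense image into its completion `ℝ` or
`ℚ_[p]`, and a product of dense maps is dense.
-/

namespace Rat.AbsoluteValue

lemma isNontrivial_real : real.IsNontrivial :=
  ⟨2, two_ne_zero, by norm_num⟩

lemma padic_natCast_self (p : ℕ) [Fact p.Prime] : padic p p = (p : ℝ)⁻¹ := by
  simp [padicNorm.padicNorm_p_of_prime]

lemma isNontrivial_padic (p : ℕ) [hp : Fact p.Prime] : (padic p).IsNontrivial :=
  ⟨p, by exact_mod_cast hp.out.ne_zero, by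
    rw [padic_natCast_self]
    exact inv_ne_one.2 (by exact_mod_cast hp.out.ne_one)⟩

lemma padic_isEquiv_padic_iff {p q : ℕ} [hp : Fact p.Prime] [hq : Fact q.Prime] :
    (padic p).IsEquiv (padic q) ↔ p = q := by
  refine ⟨fun h => ?_, fun h => h ▸ .rfl⟩
  by_contra hpq
  have hlt : padic p p < 1 := by
    rw [padic_natCast_self]
    exact inv_lt_one_of_one_lt₀ (by exact_mod_cast hp.out.one_lt)
  have hone : padic q p = 1 := by
    rw [padic_eq_padicNorm]
    exact_mod_cast (padicNorm.nat_eq_one_iff (p := q) p).2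
      ((Nat.prime_dvd_prime_iff_eq hq.out hp.out).not.2 (Ne.symm hpq))
  exact (h.lt_one_iff.1 hlt).ne hone

lemma isometry_ofAbs_real : Isometry fun x : WithAbs real => (x.ofAbs : ℝ) :=
  AddMonoidHomClass.isometry_of_norm ((Rat.castHom ℝ).comp (WithAbs.equiv real).toRingHom)
    fun x => by simp [WithAbs.norm_eq_apply_ofAbs, -Rat.norm_cast_real]

lemma isometry_ofAbs_padic (p : ℕ) [Fact p.Prime] :
    Isometry fun x : WithAbs (padic p) => (x.ofAbs : ℚ_[p]) :=
  AddMonoidHomClass.isometry_of_norm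
    ((Rat.castHom ℚ_[p]).comp (WithAbs.equiv (padic p)).toRingHom)
    fun x => by simp [WithAbs.norm_eq_apply_ofAbs, Padic.eq_padicNorm]

lemma denseRange_ofAbs_real : DenseRange fun x : WithAbs real => (x.ofAbs : ℝ) := by
  change Dense (Set.range (Rat.cast ∘ WithAbs.ofAbs))
  rw [(WithAbs.ofAbs_surjective _).range_comp]
  exact Rat.denseRange_cast

lemma denseRange_ofAbs_padic (p : ℕ) [Fact p.Prime] :
    DenseRange fun x : WithAbs (padic p) => (x.ofAbs : ℚ_[p]) := by
  change Dense (Set.range (Rat.cast ∘ WithAbs.ofAbs))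
  rw [(WithAbs.ofAbs_surjective _).range_comp]
  exact Padic.denseRange_ratCast p

section RealAndPadic

variable {n : ℕ} (p : Fin n → ℕ) [∀ i, Fact (p i).Prime]

def realAndPadic : Option (Fin n) → AbsoluteValue ℚ ℝ
  | none => real
  | some i => padic (p i)

lemma isNontrivial_realAndPadic (v : Option (Fin n)) : (realAndPadic p v).IsNontrivial := by
  cases v
  exacts [isNontrivial_real, isNontrivial_padic _]

lemma pairwise_not_isEquiv_realAndPadic (hinj : Function.Injective p) :
    Pairwise fun v w => ¬(realAndPadic p v).IsEquiv (realAndPadic p w) := by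
  rintro (_ | i) (_ | j) hvw
  · exact absurd rfl hvw
  · exact not_real_isEquiv_padic (p j)
  · exact fun h => not_real_isEquiv_padic (p i) h.symm
  · exact fun h => hvw (congrArg some (hinj (padic_isEquiv_padic_iff.1 h)))

noncomputable def ofAbsRealPadic (z : ∀ v, WithAbs (realAndPadic p v)) :
    ℝ × ∀ i, ℚ_[p i] :=
  ((z none).ofAbs, fun i => (z (some i)).ofAbs)

lemma continuous_ofAbsRealPadic : Continuous (ofAbsRealPadic p) :=
  (isometry_ofAbs_real.continuous.comp (continuous_apply none)).prodMk <|
    continuous_pi fun i => (isometry_ofAbs_padic (p i)).continuous.comp (continuous_apply (some i))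

lemma denseRange_ofAbsRealPadic : DenseRange (ofAbsRealPadic p) := by
  refine (denseRange_ofAbs_real.prodMap (.piMap fun i => denseRange_ofAbs_padic (p i))).mono ?_
  rintro _ ⟨z, rfl⟩
  exact ⟨Equiv.piOptionEquivProd.symm z, rfl⟩

end RealAndPadic

end Rat.AbsoluteValue

theorem weak_approximation_rat
    {n : ℕ} (p : Fin n → ℕ) [∀ i, Fact (p i).Prime]
    (hinj : Function.Injective p) :
    DenseRange (fun q : ℚ =>
      (((q : ℝ), fun i => (q : ℚ_[p i])) : ℝ × ∀ i, ℚ_[p i])) :=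
  (Rat.AbsoluteValue.denseRange_ofAbsRealPadic p).comp
    (AbsoluteValue.denseRange_algebraMap_pi (Rat.AbsoluteValue.isNontrivial_realAndPadic p)
      (Rat.AbsoluteValue.pairwise_not_isEquiv_realAndPadic p hinj))
    (Rat.AbsoluteValue.continuous_ofAbsRealPadic p)
end

section
/- Let a, b be nonzero rational numbers. The equation z^2 = a*x^2 + b*y^2 has a nontrivial rational solution (x, y, z) ≠ (0, 0, 0) if and only if it has a nontrivial solution over R and over Q_p for every prime p. -/
/-!
Legendre's descent. Scaling by squares, we may assume that `a` and `b` are squarefree integers with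
`|a| ≤ |b|`. For a prime `p ∣ b`, a primitive `p`-adic solution reduces mod `p` to `z² ≡ a x²` with
`p ∤ x`, so `a` is a square mod `p`, hence mod `b` by the Chinese remainder theorem:
`t² - a = b c` with `|c| < |b|`. As `b c` is the norm of `t + √a` and norms from `K(√a)` form a
group, `z² = a x² + b y²` and `z² = a x² + c y²` are solvable over the same fields, which moves both
the local hypotheses and the global conclusion to the smaller pair `(a, c)`, with square factors
of `c` removed. The descent ends at `|a| = |b| = 1`, where the real solution rules out
`a = b = -1`.
-/

def ConicSolvable (K : Type*) [Field K] (a b : K) : Prop :=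
  ∃ x y z : K, ¬(x = 0 ∧ y = 0 ∧ z = 0) ∧ z ^ 2 = a * x ^ 2 + b * y ^ 2

/-- `c` is a norm from `K(√a)`. -/
def IsSqrtNorm {K : Type*} [Field K] (a c : K) : Prop :=
  ∃ u v : K, c = u ^ 2 - a * v ^ 2

section Field

variable {K : Type*} [Field K] {a b c s : K}

theorem ConicSolvable.symm (h : ConicSolvable K a b) : ConicSolvable K b a := by
  obtain ⟨x, y, z, hnt, he⟩ := h
  exact ⟨y, x, z, fun ⟨hy, hx, hz⟩ => hnt ⟨hx, hy, hz⟩, by rw [he]; ring⟩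

theorem conicSolvable_comm : ConicSolvable K a b ↔ ConicSolvable K b a :=
  ⟨ConicSolvable.symm, ConicSolvable.symm⟩

theorem conicSolvable_of_isSquare (ha : IsSquare a) : ConicSolvable K a b := by
  obtain ⟨r, rfl⟩ := ha
  exact ⟨1, 0, r, fun ⟨h, _, _⟩ => one_ne_zero h, by ring⟩

theorem conicSolvable_mul_sq_iff (hs : s ≠ 0) :
    ConicSolvable K a (b * s ^ 2) ↔ ConicSolvable K a b := by
  constructor
  · rintro ⟨x, y, z, hnt, he⟩
    refine ⟨x, s * y, z, fun ⟨hx, hy, hz⟩ => hnt ⟨hx, ?_, hz⟩, by rw [he]; ring⟩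
    simpa [hs] using hy
  · rintro ⟨x, y, z, hnt, he⟩
    refine ⟨x, y / s, z, fun ⟨hx, hy, hz⟩ => hnt ⟨hx, ?_, hz⟩, by rw [he]; field_simp⟩
    simpa [hs] using hy

theorem conicSolvable_sq_mul_iff (hs : s ≠ 0) :
    ConicSolvable K (a * s ^ 2) b ↔ ConicSolvable K a b := by
  rw [conicSolvable_comm, conicSolvable_mul_sq_iff hs, conicSolvable_comm]

theorem IsSqrtNorm.mul (hb : IsSqrtNorm a b) (hc : IsSqrtNorm a c) : IsSqrtNorm a (b * c) := by
  obtain ⟨u, v, rfl⟩ := hb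
  obtain ⟨u', v', rfl⟩ := hc
  exact ⟨u * u' + a * v * v', u * v' + v * u', by ring⟩

theorem IsSqrtNorm.inv (hb : IsSqrtNorm a b) : IsSqrtNorm a b⁻¹ := by
  obtain ⟨u, v, rfl⟩ := hb
  refine ⟨u / (u ^ 2 - a * v ^ 2), v / (u ^ 2 - a * v ^ 2), ?_⟩
  rcases eq_or_ne (u ^ 2 - a * v ^ 2) 0 with h | h
  · simp [h]
  · field_simp

theorem IsSqrtNorm.of_mul_left (hb0 : b ≠ 0) (hb : IsSqrtNorm a b) (hbc : IsSqrtNorm a (b * c)) :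
    IsSqrtNorm a c := by
  simpa [inv_mul_cancel_left₀ hb0] using hb.inv.mul hbc

theorem isSquare_of_sq_eq_mul_sq {x z : K} (hx : x ≠ 0) (h : z ^ 2 = a * x ^ 2) : IsSquare a :=
  ⟨z / x, by field_simp; linear_combination -h⟩

/-- When `a = r²`, the norm form `u² - a v² = (u - r v)(u + r v)` takes every value. -/
theorem IsSquare.isSqrtNorm [NeZero (2 : K)] (ha : IsSquare a) (ha0 : a ≠ 0) (c : K) :
    IsSqrtNorm a c := by
  obtain ⟨r, rfl⟩ := ha
  have hr : r ≠ 0 := by rintro rfl; simp at ha0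
  exact ⟨(c + 1) / 2, (c - 1) / (2 * r), by field_simp; ring⟩

theorem conicSolvable_iff_isSqrtNorm [NeZero (2 : K)] (ha : a ≠ 0) :
    ConicSolvable K a b ↔ IsSqrtNorm a b := by
  constructor
  · rintro ⟨x, y, z, hnt, he⟩
    by_cases hy : y = 0
    · subst hy
      have hx : x ≠ 0 := by
        rintro rfl
        exact hnt ⟨rfl, rfl, pow_eq_zero_iff two_ne_zero |>.mp (by simpa using he)⟩
      exact (isSquare_of_sq_eq_mul_sq hx (by simpa using he)).isSqrtNorm ha b
    · exact ⟨z / y, x / y, by field_simp; linear_combination -he⟩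
  · rintro ⟨u, v, rfl⟩
    exact ⟨v, 1, u, fun ⟨_, h, _⟩ => one_ne_zero h, by ring⟩

theorem conicSolvable_iff_of_sq_sub_eq_mul [NeZero (2 : K)] {t : K} (ha : a ≠ 0) (hb : b ≠ 0)
    (hc : c ≠ 0) (h : t ^ 2 - a = b * c) : ConicSolvable K a b ↔ ConicSolvable K a c := by
  have hbc : IsSqrtNorm a (b * c) := ⟨t, 1, by rw [← h]; ring⟩
  rw [conicSolvable_iff_isSqrtNorm ha, conicSolvable_iff_isSqrtNorm ha]
  exact ⟨fun hb' => hb'.of_mul_left hb hbc, fun hc' => hc'.of_mul_left hc (mul_comm b c ▸ hbc)⟩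

end Field

theorem not_conicSolvable_of_neg {K : Type*} [Field K] [LinearOrder K] [IsStrictOrderedRing K]
    {a b : K} (ha : a < 0) (hb : b < 0) : ¬ ConicSolvable K a b := by
  rintro ⟨x, y, z, hnt, he⟩
  refine hnt ⟨?_, ?_, ?_⟩ <;> by_contra h <;>
    nlinarith [sq_pos_of_ne_zero h, sq_nonneg x, sq_nonneg y, sq_nonneg z]

theorem ConicSolvable.ratCast {K : Type*} [Field K] [CharZero K] {a b : ℚ}
    (h : ConicSolvable ℚ a b) : ConicSolvable K a b := by
  obtain ⟨x, y, z, hnt, he⟩ := h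
  exact ⟨x, y, z, by simpa only [Rat.cast_eq_zero] using hnt, by exact_mod_cast he⟩

theorem Int.exists_eq_squarefree_mul_sq {n : ℤ} (hn : n ≠ 0) :
    ∃ m s : ℤ, Squarefree m ∧ s ≠ 0 ∧ n = m * s ^ 2 := by
  obtain ⟨A, B, hBA, hA⟩ := Nat.sq_mul_squarefree n.natAbs
  have hB : (B : ℤ) ≠ 0 := by
    rintro ⟨⟩
    simp_all [eq_comm (a := 0)]
  rcases Int.natAbs_eq n with h | h
  · exact ⟨A, B, Int.squarefree_natCast.2 hA, hB, by rw [h, ← hBA]; push_cast; ring⟩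
  · refine ⟨-A, B, ?_, hB, by rw [h, ← hBA]; push_cast; ring⟩
    simpa [← Int.squarefree_natAbs] using hA

theorem Rat.exists_eq_squarefree_mul_sq {q : ℚ} (hq : q ≠ 0) :
    ∃ (m : ℤ) (s : ℚ), Squarefree m ∧ s ≠ 0 ∧ q = m * s ^ 2 := by
  have hden : (q.den : ℚ) ≠ 0 := by positivity
  have hnum : q.num * q.den ≠ 0 := mul_ne_zero (Rat.num_ne_zero.2 hq) (by positivity)
  obtain ⟨m, s, hm, hs, hms⟩ := Int.exists_eq_squarefree_mul_sq hnum
  refine ⟨m, s / q.den, hm, div_ne_zero (Int.cast_ne_zero.2 hs) hden, ?_⟩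
  have hcast : (q.num : ℚ) * q.den = m * s ^ 2 := by exact_mod_cast hms
  calc q = q.num / q.den := (Rat.num_div_den q).symm
    _ = m * (s / q.den) ^ 2 := by field_simp; linear_combination hcast

theorem ZMod.isSquare_intCast_mul {m n : ℕ} (hc : m.Coprime n) {a : ℤ}
    (hm : IsSquare (a : ZMod m)) (hn : IsSquare (a : ZMod n)) : IsSquare (a : ZMod (m * n)) := by
  obtain ⟨x, hx⟩ := hm
  obtain ⟨y, hy⟩ := hn
  have : ZMod.chineseRemainder hc (a : ZMod (m * n)) = (x, y) * (x, y) := by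
    rw [map_intCast]
    exact Prod.ext hx hy
  exact ⟨(ZMod.chineseRemainder hc).symm (x, y), by
    rw [← map_mul, ← this, RingEquiv.symm_apply_apply]⟩

theorem ZMod.isSquare_intCast_of_squarefree {n : ℕ} (hn : Squarefree n) {a : ℤ}
    (h : ∀ p : ℕ, p.Prime → p ∣ n → IsSquare (a : ZMod p)) : IsSquare (a : ZMod n) := by
  induction n using induction_on_primes with
  | zero => exact absurd hn not_squarefree_zero
  | one => exact ⟨0, Subsingleton.elim _ _⟩
  | prime_mul p n hp ih =>
    have hcop : p.Coprime n := by
      by_contra hc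
      exact hp.not_isUnit (hn p <| mul_dvd_mul_left p <| hp.dvd_iff_not_coprime.mpr hc)
    exact ZMod.isSquare_intCast_mul hcop (h p hp (dvd_mul_right p n))
      (ih hn.of_mul_right fun q hq hqn => h q hq (dvd_mul_of_dvd_right hqn p))

/-- Taking `|t| ≤ |b| / 2` gives `|b c| ≤ b² / 4 + |b| < b²`. -/
theorem Int.exists_sq_sub_eq_mul_of_isSquare {a b : ℤ} (hb : 2 ≤ b.natAbs)
    (hab : a.natAbs ≤ b.natAbs) (ha : IsSquare (a : ZMod b.natAbs)) :
    ∃ t c : ℤ, t ^ 2 - a = b * c ∧ c.natAbs < b.natAbs := by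
  have : NeZero b.natAbs := ⟨by omega⟩
  obtain ⟨r, hr⟩ := ha
  have hdvd : b ∣ r.valMinAbs ^ 2 - a := by
    rw [← Int.natAbs_dvd, ← ZMod.intCast_eq_intCast_iff_dvd_sub, hr]
    push_cast [ZMod.coe_valMinAbs]
    ring
  obtain ⟨c, hc⟩ := hdvd
  refine ⟨r.valMinAbs, c, hc, ?_⟩
  have ht : 2 * r.valMinAbs.natAbs ≤ b.natAbs := by
    have := r.natAbs_valMinAbs_le; omega
  have hbc : b.natAbs * c.natAbs ≤ r.valMinAbs.natAbs ^ 2 + a.natAbs := by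
    rw [← Int.natAbs_mul, ← hc, ← Int.natAbs_pow]
    exact Int.natAbs_sub_le _ _
  by_contra! hcb
  nlinarith [Nat.mul_le_mul_left b.natAbs hcb, Nat.mul_le_mul ht ht]

theorem Prime.not_dvd_of_sq_eq_add_mul {R : Type*} [CommRing R] [IsDomain R] {π u a x y z : R}
    (hπ : Prime π) (hu : IsUnit u) (h : z ^ 2 = a * x ^ 2 + π * u * y ^ 2)
    (hprim : ¬(π ∣ x ∧ π ∣ y ∧ π ∣ z)) : ¬ π ∣ x := by
  intro hx
  have hz : π ∣ z := hπ.dvd_of_dvd_pow (n := 2) <| h ▸ dvd_add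
    (dvd_mul_of_dvd_right (dvd_pow hx two_ne_zero) a) (dvd_mul_of_dvd_left (dvd_mul_right π u) _)
  have hπ2 : π * π ∣ π * (u * y ^ 2) := by
    have : π * (u * y ^ 2) = z ^ 2 - a * x ^ 2 := by rw [h]; ring
    rw [this, ← sq]
    exact dvd_sub (pow_dvd_pow_of_dvd hz 2) (dvd_mul_of_dvd_right (pow_dvd_pow_of_dvd hx 2) a)
  have hy : π ∣ y :=
    hπ.dvd_of_dvd_pow <| hu.dvd_mul_left.1 <| (mul_dvd_mul_iff_left hπ.ne_zero).1 hπ2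
  exact hprim ⟨hx, hy, hz⟩

namespace PadicInt

variable {p : ℕ} [Fact p.Prime]

theorem toZMod_eq_zero_iff_dvd {x : ℤ_[p]} : toZMod x = 0 ↔ (p : ℤ_[p]) ∣ x := by
  rw [← RingHom.mem_ker, ker_toZMod, maximalIdeal_eq_span_p, Ideal.mem_span_singleton]

/-- Dividing by the coordinate of largest norm gives an integral solution with a coordinate `1`. -/
theorem exists_of_conicSolvable {a b : ℤ_[p]} (h : ConicSolvable ℚ_[p] a b) :
    ∃ x y z : ℤ_[p], (x = 1 ∨ y = 1 ∨ z = 1) ∧ z ^ 2 = a * x ^ 2 + b * y ^ 2 := by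
  classical
  obtain ⟨x, y, z, hnt, he⟩ := h
  obtain ⟨w, hw, hmax⟩ := Finset.exists_max_image {x, y, z} (‖·‖) (by simp)
  have hw0 : w ≠ 0 := by
    rintro rfl
    simp only [Finset.mem_insert, Finset.mem_singleton, norm_zero, forall_eq_or_imp,
      forall_eq, norm_le_zero_iff] at hmax
    exact hnt hmax
  have hle : ∀ v ∈ ({x, y, z} : Finset ℚ_[p]), ‖v / w‖ ≤ 1 := fun v hv => by
    rw [norm_div, div_le_one (norm_pos_iff.2 hw0)]
    exact hmax v hv
  refine ⟨⟨x / w, hle x (by simp)⟩, ⟨y / w, hle y (by simp)⟩, ⟨z / w, hle z (by simp)⟩, ?_, ?_⟩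
  · simp only [Finset.mem_insert, Finset.mem_singleton] at hw
    rcases hw with rfl | rfl | rfl
    · exact Or.inl (PadicInt.ext (div_self hw0))
    · exact Or.inr (Or.inl (PadicInt.ext (div_self hw0)))
    · exact Or.inr (Or.inr (PadicInt.ext (div_self hw0)))
  · apply PadicInt.ext
    change (z / w) ^ 2 = a * (x / w) ^ 2 + b * (y / w) ^ 2
    field_simp
    linear_combination he

theorem isSquare_toZMod_of_conicSolvable {a u : ℤ_[p]} (hu : IsUnit u)
    (h : ConicSolvable ℚ_[p] a ((p * u : ℤ_[p]) : ℚ_[p])) : IsSquare (toZMod a) := by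
  obtain ⟨x, y, z, hone, he⟩ := exists_of_conicSolvable h
  have hprim : ¬((p : ℤ_[p]) ∣ x ∧ (p : ℤ_[p]) ∣ y ∧ (p : ℤ_[p]) ∣ z) := by
    rintro ⟨hx, hy, hz⟩
    rcases hone with rfl | rfl | rfl <;> exact prime_p.not_dvd_one ‹_›
  have hx := prime_p.not_dvd_of_sq_eq_add_mul hu he hprim
  rw [← toZMod_eq_zero_iff_dvd] at hx
  refine isSquare_of_sq_eq_mul_sq (z := toZMod z) hx ?_
  simpa only [map_pow, map_add, map_mul, map_natCast, ZMod.natCast_self, zero_mul, add_zero]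
    using congrArg toZMod he

end PadicInt

theorem Padic.isSquare_intCast_of_conicSolvable {p : ℕ} [Fact p.Prime] {a b : ℤ}
    (hb : Squarefree b) (hpb : (p : ℤ) ∣ b) (h : ConicSolvable ℚ_[p] a b) :
    IsSquare (a : ZMod p) := by
  obtain ⟨c, rfl⟩ := hpb
  have hc : IsUnit (c : ℤ_[p]) := by
    rw [PadicInt.isUnit_iff]
    refine le_antisymm (PadicInt.norm_le_one _) (not_lt.1 fun hlt => ?_)
    have hpc := (PadicInt.norm_int_lt_one_iff_dvd c).1 hlt
    exact (Nat.prime_iff_prime_int.1 Fact.out).not_isUnit (hb _ (mul_dvd_mul_left _ hpc))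
  have := PadicInt.isSquare_toZMod_of_conicSolvable (a := a) hc (by convert h using 2 <;> simp)
  simpa using this

def IsLocallySolvable (a b : ℚ) : Prop :=
  ConicSolvable ℝ a b ∧ ∀ (p : ℕ) [Fact p.Prime], ConicSolvable ℚ_[p] a b

theorem ConicSolvable.isLocallySolvable {a b : ℚ} (h : ConicSolvable ℚ a b) :
    IsLocallySolvable a b :=
  ⟨h.ratCast, fun _ _ => h.ratCast⟩

theorem IsLocallySolvable.of_forall_imp {a b a' b' : ℚ}
    (h : ∀ (K : Type) [Field K] [CharZero K], ConicSolvable K a b → ConicSolvable K a' b')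
    (hloc : IsLocallySolvable a b) : IsLocallySolvable a' b' :=
  ⟨h ℝ hloc.1, fun p _ => h ℚ_[p] (hloc.2 p)⟩

theorem conicSolvable_of_natAbs_eq_one {a b : ℤ} (ha : a.natAbs = 1) (hb : b.natAbs = 1)
    (hR : ConicSolvable ℝ a b) : ConicSolvable ℚ a b := by
  rcases Int.natAbs_eq_iff.1 ha with rfl | rfl
  · exact conicSolvable_of_isSquare ⟨1, by norm_num⟩
  rcases Int.natAbs_eq_iff.1 hb with rfl | rfl
  · exact (conicSolvable_of_isSquare ⟨1, by norm_num⟩).symm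
  · exact absurd hR (not_conicSolvable_of_neg (by norm_num) (by norm_num))

theorem conicSolvable_of_isLocallySolvable_of_squarefree {a b : ℤ} (ha : Squarefree a)
    (hb : Squarefree b) (hloc : IsLocallySolvable a b) : ConicSolvable ℚ a b := by
  induction hn : a.natAbs + b.natAbs using Nat.strong_induction_on generalizing a b with
  | _ n ih =>
  wlog hab : a.natAbs ≤ b.natAbs generalizing a b
  · exact (this hb ha ⟨hloc.1.symm, fun p _ => (hloc.2 p).symm⟩ (by omega) (by omega)).symm
  obtain hb1 | hb2 : b.natAbs = 1 ∨ 2 ≤ b.natAbs := by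
    have := Int.natAbs_pos.2 hb.ne_zero; omega
  · exact conicSolvable_of_natAbs_eq_one (by have := Int.natAbs_pos.2 ha.ne_zero; omega) hb1
      (by simpa using hloc.1)
  have hsq : IsSquare (a : ZMod b.natAbs) :=
    ZMod.isSquare_intCast_of_squarefree (Int.squarefree_natAbs.2 hb) fun p hp hpb =>
      have : Fact p.Prime := ⟨hp⟩
      Padic.isSquare_intCast_of_conicSolvable hb (Int.natCast_dvd.2 hpb) (by simpa using hloc.2 p)
  obtain ⟨t, c, htc, hcb⟩ := Int.exists_sq_sub_eq_mul_of_isSquare hb2 hab hsq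
  rcases eq_or_ne c 0 with rfl | hc
  · have hat : a = t ^ 2 := by linarith
    exact conicSolvable_of_isSquare ⟨t, by rw [hat]; push_cast; ring⟩
  obtain ⟨c₀, s, hc₀, hs, rfl⟩ := Int.exists_eq_squarefree_mul_sq hc
  have key : ∀ (K : Type) [Field K] [CharZero K],
      ConicSolvable K (a : ℚ) (b : ℚ) ↔ ConicSolvable K (a : ℚ) (c₀ : ℚ) := fun K _ _ => by
    push_cast
    rw [conicSolvable_iff_of_sq_sub_eq_mul (t := (t : K)) (c := (c₀ : K) * (s : K) ^ 2)
      (by simpa using ha.ne_zero) (by simpa using hb.ne_zero) (by simpa using hc)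
      (by exact_mod_cast htc),
      conicSolvable_mul_sq_iff (by simpa using hs)]
  have hc₀b : c₀.natAbs < b.natAbs := by
    refine lt_of_le_of_lt ?_ hcb
    rw [Int.natAbs_mul, Int.natAbs_pow]
    exact Nat.le_mul_of_pos_right _ (pow_pos (Int.natAbs_pos.2 hs) 2)
  simpa using (key ℚ).2 (ih _ (by omega) ha hc₀ (hloc.of_forall_imp fun K _ _ => (key K).1) rfl)

theorem conicSolvable_of_isLocallySolvable {a b : ℚ} (ha : a ≠ 0) (hb : b ≠ 0)
    (hloc : IsLocallySolvable a b) : ConicSolvable ℚ a b := by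
  obtain ⟨a₀, s, ha₀, hs, rfl⟩ := Rat.exists_eq_squarefree_mul_sq ha
  obtain ⟨b₀, u, hb₀, hu, rfl⟩ := Rat.exists_eq_squarefree_mul_sq hb
  have key : ∀ (K : Type) [Field K] [CharZero K],
      ConicSolvable K ((a₀ * s ^ 2 : ℚ) : K) ((b₀ * u ^ 2 : ℚ) : K) ↔
        ConicSolvable K (a₀ : ℚ) (b₀ : ℚ) := fun K _ _ => by
    push_cast
    rw [conicSolvable_mul_sq_iff (by simpa using hu), conicSolvable_sq_mul_iff (by simpa using hs)]
  simpa using (key ℚ).2 (conicSolvable_of_isLocallySolvable_of_squarefree ha₀ hb₀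
    (hloc.of_forall_imp fun K _ _ => (key K).1))

theorem hasse_minkowski_conics
    (a b : ℚ) (ha : a ≠ 0) (hb : b ≠ 0) :
    (∃ x y z : ℚ, ¬ (x = 0 ∧ y = 0 ∧ z = 0) ∧
        z ^ 2 = a * x ^ 2 + b * y ^ 2) ↔
      ((∃ x y z : ℝ, ¬ (x = 0 ∧ y = 0 ∧ z = 0) ∧
          z ^ 2 = a * x ^ 2 + b * y ^ 2) ∧
        ∀ (p : ℕ) (hp : p.Prime), ∃ x y z : @Padic p ⟨hp⟩,
          ¬ (x = 0 ∧ y = 0 ∧ z = 0) ∧ z ^ 2 = a * x ^ 2 + b * y ^ 2) :=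
  ⟨fun h =>
    have hloc := ConicSolvable.isLocallySolvable h
    ⟨hloc.1, fun p hp => @hloc.2 p ⟨hp⟩⟩,
    fun ⟨hR, hP⟩ => conicSolvable_of_isLocallySolvable ha hb ⟨hR, fun p _ => hP p Fact.out⟩⟩
end
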